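/- arXiv:1810.00745 — 2 statements merged into one kernel-verified Lean document; each statement's English description precedes it below -/
import Mathlib

section
/- Composite Simpson rule error bound: if f : ℝ → ℝ is four times continuously differentiable on [a,b], then |∫_a^b f(x) dx − (h/6)·∑_{i=1}^{N} (f(x_{i−1}) + 4·f((x_{i−1}+x_i)/2) + f(x_i))| ≤ ((b−a)/2880)·h⁴·sup_{x ∈ [a,b]} |f⁽⁴⁾(x)|. -/
/-!
On a panel with midpoint `m` and half-width `H`, the Simpson defect
`E(t) = ∫_{m-t}^{m+t} f - t/3 (f(m-t) + 4 f(m) + f(m+t))` vanishes together with its first two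
derivatives at `t = 0`, and its third derivative is `-t/3 (f'''(m+t) - f'''(m-t))`, which the
mean value theorem bounds by `2 M t² / 3` with `M = sup |f⁽⁴⁾|`. Integrating three times gives
`|E(H)| ≤ M H⁵ / 90 = M (2H)⁵ / 2880`, and the `N` panels of width `h` add up to
`N h⁵ M / 2880 = (b - a) h⁴ M / 2880`.
-/

open Set MeasureTheory intervalIntegral

theorem abs_le_mul_pow_of_hasDerivWithinAt {φ ψ : ℝ → ℝ} {H C : ℝ} {n : ℕ}
    (hφ : ∀ t ∈ Icc 0 H, HasDerivWithinAt φ (ψ t) (Icc 0 H) t) (hφ0 : φ 0 = 0)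
    (hψ : ∀ t ∈ Icc 0 H, |ψ t| ≤ C * t ^ n) {t : ℝ} (ht : t ∈ Icc 0 H) :
    |φ t| ≤ C / (n + 1) * t ^ (n + 1) := by
  have hB (s : ℝ) : HasDerivAt (fun s => C / (n + 1) * s ^ (n + 1)) (C * s ^ n) s := by
    refine ((hasDerivAt_pow (n + 1) s).const_mul (C / (n + 1))).congr_deriv ?_
    push_cast
    field_simp
  exact image_norm_le_of_norm_deriv_right_le_deriv_boundary
    (fun s hs => (hφ s hs).continuousWithinAt)
    (fun s hs => (hφ s (Ico_subset_Icc_self hs)).mono_of_mem_nhdsWithin (Icc_mem_nhdsGE_of_mem hs))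
    (by simp [hφ0]) hB (fun s hs => hψ s (Ico_subset_Icc_self hs)) ht

theorem le_biSup_of_bddAbove_image {α : Type*} {f : α → ℝ} {s : Set α} (hf : BddAbove (f '' s))
    {y : α} (hy : y ∈ s) : f y ≤ ⨆ t ∈ s, f t := by
  refine le_ciSup₂ (f := fun t (_ : t ∈ s) => f t) (hf.mono ?_) y hy
  exact iUnion_subset fun t => range_subset_iff.2 fun ht => mem_image_of_mem f ht

theorem ContDiffOn.hasDerivWithinAt_iteratedDerivWithin {𝕜 F : Type*} [NontriviallyNormedField 𝕜]
    [NormedAddCommGroup F] [NormedSpace 𝕜 F] {f : 𝕜 → F} {s : Set 𝕜} {n : WithTop ℕ∞} {k : ℕ}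
    (hf : ContDiffOn 𝕜 n f s) (hs : UniqueDiffOn 𝕜 s) (hk : k < n) {y : 𝕜} (hy : y ∈ s) :
    HasDerivWithinAt (iteratedDerivWithin k f s) (iteratedDerivWithin (k + 1) f s y) s y := by
  rw [iteratedDerivWithin_succ]
  exact (hf.differentiableOn_iteratedDerivWithin hk hs y hy).hasDerivWithinAt

theorem ContinuousOn.hasDerivWithinAt_integral_Icc {E : Type*} [NormedAddCommGroup E]
    [NormedSpace ℝ E] [CompleteSpace E] {f : ℝ → E} {c d y : ℝ} (hf : ContinuousOn f (Icc c d))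
    (hy : y ∈ Icc c d) : HasDerivWithinAt (fun u => ∫ x in c..u, f x) (f y) (Icc c d) y := by
  have : Fact (y ∈ Icc c d) := ⟨hy⟩
  exact integral_hasDerivWithinAt_right
    ((hf.mono (Icc_subset_Icc le_rfl hy.2)).intervalIntegrable_of_Icc hy.1)
    (hf.stronglyMeasurableAtFilter_nhdsWithin measurableSet_Icc y) (hf y hy)

section Reflect

variable {u u' : ℝ → ℝ} {m H t : ℝ}

theorem add_mem_Icc_sub_add (ht : t ∈ Icc 0 H) : m + t ∈ Icc (m - H) (m + H) :=
  ⟨by linarith [ht.1, ht.2], by linarith [ht.2]⟩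

theorem sub_mem_Icc_sub_add (ht : t ∈ Icc 0 H) : m - t ∈ Icc (m - H) (m + H) :=
  ⟨by linarith [ht.2], by linarith [ht.1, ht.2]⟩

theorem HasDerivWithinAt.comp_const_add_Icc {v : ℝ}
    (hu : HasDerivWithinAt u v (Icc (m - H) (m + H)) (m + t)) :
    HasDerivWithinAt (fun s => u (m + s)) v (Icc 0 H) t := by
  simpa [Function.comp_def] using hu.comp t ((hasDerivWithinAt_id t (Icc 0 H)).const_add m)
    fun _ hs => add_mem_Icc_sub_add hs

theorem HasDerivWithinAt.comp_const_sub_Icc {v : ℝ}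
    (hu : HasDerivWithinAt u v (Icc (m - H) (m + H)) (m - t)) :
    HasDerivWithinAt (fun s => u (m - s)) (-v) (Icc 0 H) t := by
  simpa [Function.comp_def] using hu.comp t ((hasDerivWithinAt_id t (Icc 0 H)).const_sub m)
    fun _ hs => sub_mem_Icc_sub_add hs

theorem hasDerivWithinAt_add_reflect
    (hu : ∀ y ∈ Icc (m - H) (m + H), HasDerivWithinAt u (u' y) (Icc (m - H) (m + H)) y)
    (ht : t ∈ Icc 0 H) :
    HasDerivWithinAt (fun s => u (m + s) + u (m - s)) (u' (m + t) - u' (m - t)) (Icc 0 H) t :=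
  ((hu _ (add_mem_Icc_sub_add ht)).comp_const_add_Icc.fun_add
    (hu _ (sub_mem_Icc_sub_add ht)).comp_const_sub_Icc).congr_deriv (sub_eq_add_neg _ _).symm

theorem hasDerivWithinAt_sub_reflect
    (hu : ∀ y ∈ Icc (m - H) (m + H), HasDerivWithinAt u (u' y) (Icc (m - H) (m + H)) y)
    (ht : t ∈ Icc 0 H) :
    HasDerivWithinAt (fun s => u (m + s) - u (m - s)) (u' (m + t) + u' (m - t)) (Icc 0 H) t :=
  ((hu _ (add_mem_Icc_sub_add ht)).comp_const_add_Icc.fun_sub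
    (hu _ (sub_mem_Icc_sub_add ht)).comp_const_sub_Icc).congr_deriv (sub_neg_eq_add _ _)

theorem abs_sub_reflect_le {M : ℝ}
    (hu : ∀ y ∈ Icc (m - H) (m + H), HasDerivWithinAt u (u' y) (Icc (m - H) (m + H)) y)
    (hM : ∀ y ∈ Icc (m - H) (m + H), |u' y| ≤ M) (ht : t ∈ Icc 0 H) :
    |u (m + t) - u (m - t)| ≤ M * (2 * t) := by
  have hlip := Convex.norm_image_sub_le_of_norm_hasDerivWithin_le hu
    (by simpa only [Real.norm_eq_abs] using hM) (convex_Icc _ _)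
    (sub_mem_Icc_sub_add ht) (add_mem_Icc_sub_add ht)
  rwa [Real.norm_eq_abs, Real.norm_eq_abs, add_sub_sub_cancel, ← two_mul,
    abs_of_nonneg (by linarith [ht.1] : (0 : ℝ) ≤ 2 * t)] at hlip

end Reflect

theorem abs_sub_simpson_le_of_hasDerivWithinAt {G : ℝ → ℝ} {g : ℕ → ℝ → ℝ} {m H M : ℝ}
    (hH : 0 ≤ H)
    (hG : ∀ y ∈ Icc (m - H) (m + H), HasDerivWithinAt G (g 0 y) (Icc (m - H) (m + H)) y)
    (hg : ∀ k < 4, ∀ y ∈ Icc (m - H) (m + H),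
      HasDerivWithinAt (g k) (g (k + 1) y) (Icc (m - H) (m + H)) y)
    (hM : ∀ y ∈ Icc (m - H) (m + H), |g 4 y| ≤ M) :
    |G (m + H) - G (m - H) - H / 3 * (g 0 (m - H) + 4 * g 0 m + g 0 (m + H))| ≤
      M / 90 * H ^ 5 := by
  have hthird (t : ℝ) : HasDerivWithinAt (fun s : ℝ => s / 3) (1 / 3) (Icc 0 H) t :=
    (hasDerivWithinAt_id t _).div_const 3
  set E₀ := fun t => G (m + t) - G (m - t) - t / 3 * (g 0 (m + t) + g 0 (m - t) + 4 * g 0 m)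
  set E₁ := fun t => 2 / 3 * (g 0 (m + t) + g 0 (m - t)) - 4 / 3 * g 0 m
    - t / 3 * (g 1 (m + t) - g 1 (m - t))
  set E₂ := fun t => 1 / 3 * (g 1 (m + t) - g 1 (m - t)) - t / 3 * (g 2 (m + t) + g 2 (m - t))
  set E₃ := fun t => -(t / 3) * (g 3 (m + t) - g 3 (m - t))
  have hE₀ (t) (ht : t ∈ Icc 0 H) : HasDerivWithinAt E₀ (E₁ t) (Icc 0 H) t := by
    refine ((hasDerivWithinAt_sub_reflect hG ht).sub ((hthird t).mul
      ((hasDerivWithinAt_add_reflect (hg 0 (by norm_num)) ht).add_const (4 * g 0 m))))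
      |>.congr_deriv ?_
    simp only [E₁]
    ring
  have hE₁ (t) (ht : t ∈ Icc 0 H) : HasDerivWithinAt E₁ (E₂ t) (Icc 0 H) t := by
    refine (((hasDerivWithinAt_add_reflect (hg 0 (by norm_num)) ht).const_mul (2 / 3)).sub_const _
      |>.sub ((hthird t).mul (hasDerivWithinAt_sub_reflect (hg 1 (by norm_num)) ht))).congr_deriv ?_
    simp only [E₂]
    ring
  have hE₂ (t) (ht : t ∈ Icc 0 H) : HasDerivWithinAt E₂ (E₃ t) (Icc 0 H) t := by
    refine (((hasDerivWithinAt_sub_reflect (hg 1 (by norm_num)) ht).const_mul (1 / 3)).sub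
      ((hthird t).mul (hasDerivWithinAt_add_reflect (hg 2 (by norm_num)) ht))).congr_deriv ?_
    simp only [E₃]
    ring
  have hE₃_le (t) (ht : t ∈ Icc 0 H) : |E₃ t| ≤ 2 * M / 3 * t ^ 2 :=
    calc |E₃ t| = t / 3 * |g 3 (m + t) - g 3 (m - t)| := by
          rw [abs_mul, abs_neg, abs_of_nonneg (by linarith [ht.1])]
      _ ≤ t / 3 * (M * (2 * t)) := by
          gcongr
          · linarith [ht.1]
          · exact abs_sub_reflect_le (hg 3 (by norm_num)) hM ht
      _ = 2 * M / 3 * t ^ 2 := by ring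
  have hE₂_le (t) (ht : t ∈ Icc 0 H) : |E₂ t| ≤ 2 * M / 9 * t ^ 3 :=
    (abs_le_mul_pow_of_hasDerivWithinAt hE₂ (by simp [E₂]) hE₃_le ht).trans_eq (by push_cast; ring)
  have hE₁_le (t) (ht : t ∈ Icc 0 H) : |E₁ t| ≤ M / 18 * t ^ 4 :=
    (abs_le_mul_pow_of_hasDerivWithinAt hE₁ (by simp [E₁]; ring) hE₂_le ht).trans_eq
      (by push_cast; ring)
  calc _ = |E₀ H| := by simp only [E₀]; ring_nf
    _ ≤ M / 90 * H ^ 5 :=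
      (abs_le_mul_pow_of_hasDerivWithinAt hE₀ (by simp [E₀]) hE₁_le ⟨hH, le_rfl⟩).trans_eq
        (by push_cast; ring)

theorem abs_integral_sub_simpson_le {f : ℝ → ℝ} {s : Set ℝ} {c d M : ℝ} (hs : UniqueDiffOn ℝ s)
    (hf : ContDiffOn ℝ 4 f s) (hcd : c ≤ d) (hcds : Icc c d ⊆ s)
    (hM : ∀ y ∈ Icc c d, |iteratedDerivWithin 4 f s y| ≤ M) :
    |(∫ t in c..d, f t) - (d - c) / 6 * (f c + 4 * f ((c + d) / 2) + f d)| ≤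
      (d - c) ^ 5 / 2880 * M := by
  set m := (c + d) / 2
  set H := (d - c) / 2
  have hc : m - H = c := by ring
  have hd : m + H = d := by ring
  have key := abs_sub_simpson_le_of_hasDerivWithinAt (G := fun u => ∫ t in c..u, f t)
    (g := fun k => iteratedDerivWithin k f s) (m := m) (H := H) (M := M) (by linarith)
    (by rw [hc, hd, iteratedDerivWithin_zero]
        exact fun y hy => (hf.continuousOn.mono hcds).hasDerivWithinAt_integral_Icc hy)
    (by rw [hc, hd]
        exact fun k hk y hy => (hf.hasDerivWithinAt_iteratedDerivWithin hs
          (by exact_mod_cast hk) (hcds hy)).mono hcds)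
    (by rwa [hc, hd])
  simp only [hc, hd, iteratedDerivWithin_zero, integral_same, sub_zero] at key
  calc _ = |(∫ t in c..d, f t) - H / 3 * (f c + 4 * f m + f d)| := by
        rw [show (d - c) / 6 = H / 3 by ring]
    _ ≤ M / 90 * H ^ 5 := key
    _ = (d - c) ^ 5 / 2880 * M := by ring

theorem abs_integral_sub_sum_le_of_abs_le {f : ℝ → ℝ} {x : ℕ → ℝ} {Q : ℕ → ℝ} {N : ℕ} {E : ℝ}
    (hf : ∀ i < N, IntervalIntegrable f volume (x i) (x (i + 1)))
    (hQ : ∀ i < N, |(∫ t in x i..x (i + 1), f t) - Q i| ≤ E) :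
    |(∫ t in x 0..x N, f t) - ∑ i ∈ Finset.range N, Q i| ≤ N * E := by
  rw [← sum_integral_adjacent_intervals hf, ← Finset.sum_sub_distrib]
  calc _ ≤ ∑ i ∈ Finset.range N, |(∫ t in x i..x (i + 1), f t) - Q i| :=
        Finset.abs_sum_le_sum_abs _ _
    _ ≤ ∑ _i ∈ Finset.range N, E := Finset.sum_le_sum fun i hi => hQ i (Finset.mem_range.1 hi)
    _ = N * E := by simp

/-- Composite Simpson rule error bound: if `f` is four times continuously differentiable on
`[a,b]`, `h = (b-a)/N` and `x i = a + i*h`, then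
`|∫_a^b f - (h/6) * ∑_{i=1}^N (f(x_{i-1}) + 4 f((x_{i-1}+x_i)/2) + f(x_i))|
  ≤ ((b-a)/2880) * h^4 * sup_{[a,b]} |f⁽⁴⁾|`. -/
theorem simpson_rule_error (a b : ℝ) (hab : a < b) (N : ℕ) (hN : 0 < N)
    (h : ℝ) (hh : h = (b - a) / N) (x : ℕ → ℝ) (hx : ∀ i, x i = a + i * h)
    (f : ℝ → ℝ) (hf : ContDiffOn ℝ 4 f (Set.Icc a b)) :
    |(∫ t in a..b, f t) -
        h / 6 * ∑ i ∈ Finset.range N,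
          (f (x i) + 4 * f ((x i + x (i + 1)) / 2) + f (x (i + 1)))| ≤
      (b - a) / 2880 * h ^ 4 *
        ⨆ t ∈ Set.Icc a b, |iteratedDerivWithin 4 f (Set.Icc a b) t| := by
  have hNh : N * h = b - a := by rw [hh]; field_simp
  have hh0 : 0 ≤ h := by rw [hh]; exact div_nonneg (sub_nonneg.2 hab.le) N.cast_nonneg
  have hstep (i : ℕ) : x (i + 1) - x i = h := by rw [hx, hx]; push_cast; ring
  have hmem {i : ℕ} (hi : i ≤ N) : x i ∈ Icc a b := by
    have hih : (i : ℝ) * h ≤ N * h := by gcongr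
    rw [hx]
    constructor <;> nlinarith [mul_nonneg i.cast_nonneg hh0]
  have hsub {i : ℕ} (hi : i < N) : Icc (x i) (x (i + 1)) ⊆ Icc a b :=
    Icc_subset_Icc (hmem hi.le).1 (hmem hi).2
  set M := ⨆ t ∈ Icc a b, |iteratedDerivWithin 4 f (Icc a b) t|
  have hM (y : ℝ) (hy : y ∈ Icc a b) : |iteratedDerivWithin 4 f (Icc a b) y| ≤ M :=
    le_biSup_of_bddAbove_image (isCompact_Icc.bddAbove_image
      (hf.continuousOn_iteratedDerivWithin le_rfl (uniqueDiffOn_Icc hab)).abs) hy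
  have hx0 : x 0 = a := by simp [hx]
  have hxN : x N = b := by rw [hx, hNh]; ring
  have hlocal (i : ℕ) (hi : i < N) :
      |(∫ t in x i..x (i + 1), f t) -
          h / 6 * (f (x i) + 4 * f ((x i + x (i + 1)) / 2) + f (x (i + 1)))| ≤
        h ^ 5 / 2880 * M := by
    simpa only [hstep] using abs_integral_sub_simpson_le (uniqueDiffOn_Icc hab) hf
      (by linarith [hstep i]) (hsub hi) (fun y hy => hM y (hsub hi hy))
  have hsum := abs_integral_sub_sum_le_of_abs_le (fun i hi =>
    (hf.continuousOn.mono (hsub hi)).intervalIntegrable_of_Icc (by linarith [hstep i])) hlocal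
  rw [hx0, hxN, ← Finset.mul_sum] at hsum
  exact hsum.trans_eq (by rw [← hNh]; ring)
end

section
/- Automatic differentiation recurrence for sine and cosine: if u : ℝ → ℝ is n times continuously differentiable on a neighborhood of x₀, and s = sin ∘ u, c = cos ∘ u, then for every k with 1 ≤ k ≤ n: (s)_k = (1/k) · ∑_{j=0}^{k−1} (j+1) · (c)_{k−1−j} · (u)_{j+1} and (c)_k = −(1/k) · ∑_{j=0}^{k−1} (j+1) · (s)_{k−1−j} · (u)_{j+1}. -/
/-!
Since `(sin ∘ u)' = (cos ∘ u) u'` and `(cos ∘ u)' = -(sin ∘ u) u'`, both recurrences are instances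
of one rule: if `f' = g u'` near `x`, then `k (f)_k = (f')_{k-1} = ∑ⱼ (g)_{k-1-j} (u')_j` by
Leibniz's rule, read as a Cauchy product of Taylor coefficients, and `(u')_j = (j+1) (u)_{j+1}`.
-/

open Finset Filter Topology Nat

variable {𝕜 : Type*} [NontriviallyNormedField 𝕜]

noncomputable def taylorCoeff (f : 𝕜 → 𝕜) (x : 𝕜) (k : ℕ) : 𝕜 :=
  iteratedDeriv k f x / k !

theorem Filter.EventuallyEq.taylorCoeff_eq {f g : 𝕜 → 𝕜} {x : 𝕜} (h : f =ᶠ[𝓝 x] g) (k : ℕ) :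
    taylorCoeff f x k = taylorCoeff g x k := by
  rw [taylorCoeff, taylorCoeff, h.iteratedDeriv_eq]

theorem taylorCoeff_fun_neg (f : 𝕜 → 𝕜) (x : 𝕜) (k : ℕ) :
    taylorCoeff (fun y => -f y) x k = -taylorCoeff f x k := by
  rw [taylorCoeff, taylorCoeff, iteratedDeriv_fun_neg, neg_div]

variable [CharZero 𝕜]

theorem taylorCoeff_deriv (f : 𝕜 → 𝕜) (x : 𝕜) (k : ℕ) :
    taylorCoeff (deriv f) x k = (k + 1) * taylorCoeff f x (k + 1) := by
  have : (k ! : 𝕜) ≠ 0 := cast_ne_zero.mpr k.factorial_ne_zero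
  rw [taylorCoeff, taylorCoeff, ← iteratedDeriv_succ', factorial_succ, cast_mul]
  field_simp
  push_cast
  ring

theorem taylorCoeff_mul {f g : 𝕜 → 𝕜} {x : 𝕜} {m : ℕ} (hf : ContDiffAt 𝕜 m f x)
    (hg : ContDiffAt 𝕜 m g x) :
    taylorCoeff (f * g) x m = ∑ i ∈ range (m + 1), taylorCoeff f x i * taylorCoeff g x (m - i) := by
  rw [taylorCoeff, iteratedDeriv_mul hf hg, sum_div]
  refine sum_congr rfl fun i hi => ?_
  have him : i ≤ m := Nat.lt_succ_iff.mp (mem_range.mp hi)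
  have hfact : (m.choose i : 𝕜) * i ! * (m - i)! = m ! := by
    exact_mod_cast choose_mul_factorial_mul_factorial him
  have : (m.choose i : 𝕜) ≠ 0 := cast_ne_zero.mpr (choose_pos him).ne'
  have : (i ! : 𝕜) ≠ 0 := cast_ne_zero.mpr i.factorial_ne_zero
  have : ((m - i)! : 𝕜) ≠ 0 := cast_ne_zero.mpr (m - i).factorial_ne_zero
  rw [taylorCoeff, taylorCoeff, ← hfact]
  field_simp

theorem taylorCoeff_of_deriv_eq_mul {f g u : 𝕜 → 𝕜} {x : 𝕜} {k : ℕ} (hk : k ≠ 0)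
    (hfg : deriv f =ᶠ[𝓝 x] g * deriv u) (hg : ContDiffAt 𝕜 (k - 1 : ℕ) g x)
    (hu : ContDiffAt 𝕜 k u x) :
    taylorCoeff f x k = 1 / k *
      ∑ j ∈ range k, (j + 1) * taylorCoeff g x (k - 1 - j) * taylorCoeff u x (j + 1) := by
  obtain ⟨m, rfl⟩ : ∃ m, k = m + 1 := exists_eq_succ_of_ne_zero hk
  rw [Nat.add_sub_cancel] at hg ⊢
  have hu' : ContDiffAt 𝕜 m (deriv u) x := hu.derivWithin (by push_cast; rfl)
  have : ((m + 1 : ℕ) : 𝕜) ≠ 0 := cast_ne_zero.mpr hk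
  calc taylorCoeff f x (m + 1)
      = 1 / (m + 1 : ℕ) * taylorCoeff (g * deriv u) x m := by
        rw [← hfg.taylorCoeff_eq, taylorCoeff_deriv]
        field_simp
        push_cast
        ring
    _ = _ := by
        rw [taylorCoeff_mul hg hu', ← sum_range_reflect]
        refine congrArg _ (sum_congr rfl fun j hj => ?_)
        have hjm : j ≤ m := Nat.lt_succ_iff.mp (mem_range.mp hj)
        rw [taylorCoeff_deriv, Nat.add_sub_cancel, Nat.sub_sub_self hjm]
        ring

/-- Automatic differentiation recurrence for sine and cosine: if `u` is `n` times continuously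
differentiable near `x₀`, `s = sin ∘ u`, `c = cos ∘ u`, then for `1 ≤ k ≤ n`:
`(s)_k = (1/k) ∑_{j=0}^{k-1} (j+1) (c)_{k-1-j} (u)_{j+1}` and
`(c)_k = -(1/k) ∑_{j=0}^{k-1} (j+1) (s)_{k-1-j} (u)_{j+1}`,
where `(f)_k = f⁽ᵏ⁾(x₀)/k!`. -/
theorem ad_sin_cos_rule (u : ℝ → ℝ) (x₀ : ℝ) (n : ℕ)
    (hu : ContDiffAt ℝ n u x₀) (k : ℕ) (hk1 : 1 ≤ k) (hkn : k ≤ n) :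
    iteratedDeriv k (fun x => Real.sin (u x)) x₀ / (Nat.factorial k) =
      (1 / (k : ℝ)) *
        ∑ j ∈ Finset.range k,
          ((j : ℝ) + 1) *
            (iteratedDeriv (k - 1 - j) (fun x => Real.cos (u x)) x₀ /
              (Nat.factorial (k - 1 - j))) *
            (iteratedDeriv (j + 1) u x₀ / (Nat.factorial (j + 1))) ∧
    iteratedDeriv k (fun x => Real.cos (u x)) x₀ / (Nat.factorial k) =
      -(1 / (k : ℝ)) *
        ∑ j ∈ Finset.range k,
          ((j : ℝ) + 1) *
            (iteratedDeriv (k - 1 - j) (fun x => Real.sin (u x)) x₀ /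
              (Nat.factorial (k - 1 - j))) *
            (iteratedDeriv (j + 1) u x₀ / (Nat.factorial (j + 1))) := by
  have hk : k ≠ 0 := by omega
  have huk : ContDiffAt ℝ k u x₀ := hu.of_le (by exact_mod_cast hkn)
  have hu_diff : ∀ᶠ y in 𝓝 x₀, DifferentiableAt ℝ u y :=
    (huk.eventually (by simp)).mono fun y hy => hy.differentiableAt (by simpa)
  have hsin : deriv (fun x => Real.sin (u x)) =ᶠ[𝓝 x₀] (fun y => Real.cos (u y)) * deriv u :=
    hu_diff.mono fun y hy => deriv_sin hy
  have hcos : deriv (fun x => Real.cos (u x)) =ᶠ[𝓝 x₀] (fun y => -Real.sin (u y)) * deriv u :=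
    hu_diff.mono fun y hy => deriv_cos hy
  have hum : ContDiffAt ℝ (k - 1 : ℕ) u x₀ := huk.of_le (by exact_mod_cast k.sub_le 1)
  refine ⟨taylorCoeff_of_deriv_eq_mul hk hsin hum.cos huk, ?_⟩
  have hcos_rule := taylorCoeff_of_deriv_eq_mul hk hcos hum.sin.neg huk
  simp only [taylorCoeff_fun_neg, neg_mul, mul_neg, sum_neg_distrib] at hcos_rule
  rw [neg_mul]
  exact hcos_rule
end
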